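/- arXiv:2201.09785 — 3 statements merged into one kernel-verified Lean document; each statement's English description precedes it below -/
import Mathlib

section
/- Let ℓ: ℝ × ℝ → ℝ be β-Lipschitz in its first argument, f: ℝ^d → ℝ differentiable at θ₀, and for inputs x₁,...,x_m with labels y₁,...,y_m define M_Grad = ‖(1/m) Σᵢ ∇_θ ℓ(f(xᵢ,θ), yᵢ)|_{θ=θ₀}‖₂ and M_trace = √((1/m) Σᵢ ‖∇_θ f(xᵢ,θ₀)‖₂²). Then M_Grad ≤ β · M_trace. -/
set_option maxHeartbeats 1000000


open scoped RealInnerProductSpace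

/-- If `ℓ` is `β`-Lipschitz in its first argument, then the gradient-norm metric
`M_Grad = ‖(1/m) Σᵢ ∇_θ ℓ(F i θ, yᵢ)|_{θ₀}‖` is bounded by
`β · M_trace` with `M_trace = √((1/m) Σᵢ ‖∇_θ (F i) θ₀‖²)`. -/
theorem stmt_4 {m d : ℕ} (hm : 0 < m) (β : ℝ) (hβ : 0 ≤ β)
    (ℓ : ℝ → ℝ → ℝ)
    (hlip : ∀ y a b, |ℓ a y - ℓ b y| ≤ β * |a - b|)
    (F : Fin m → EuclideanSpace ℝ (Fin d) → ℝ)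
    (y : Fin m → ℝ) (θ₀ : EuclideanSpace ℝ (Fin d))
    (hF : ∀ i, DifferentiableAt ℝ (F i) θ₀)
    (hℓd : ∀ i, DifferentiableAt ℝ (fun z => ℓ z (y i)) (F i θ₀)) :
    ‖(1 / (m : ℝ)) • ∑ i, gradient (fun θ => ℓ (F i θ) (y i)) θ₀‖ ≤
      β * Real.sqrt ((1 / (m : ℝ)) * ∑ i, ‖gradient (F i) θ₀‖ ^ 2) := by
  set c : Fin m → ℝ := fun i => deriv (fun z => ℓ z (y i)) (F i θ₀) with hc
  -- gradient of composition
  have hgrad : ∀ i, gradient (fun θ => ℓ (F i θ) (y i)) θ₀ = c i • gradient (F i) θ₀ := by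
    intro i
    have h1 : HasDerivAt (fun z => ℓ z (y i)) (c i) (F i θ₀) := (hℓd i).hasDerivAt
    have h2 : HasGradientAt (F i) (gradient (F i) θ₀) θ₀ := (hF i).hasGradientAt
    have h3 : HasFDerivAt (F i)
        ((InnerProductSpace.toDual ℝ _) (gradient (F i) θ₀)) θ₀ :=
      hasGradientAt_iff_hasFDerivAt.mp h2
    have h4 : HasFDerivAt (fun θ => ℓ (F i θ) (y i))
        (c i • (InnerProductSpace.toDual ℝ _) (gradient (F i) θ₀)) θ₀ :=
      h1.comp_hasFDerivAt θ₀ h3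
    have h5 : HasGradientAt (fun θ => ℓ (F i θ) (y i)) (c i • gradient (F i) θ₀) θ₀ := by
      rw [hasGradientAt_iff_hasFDerivAt]
      have heq : (InnerProductSpace.toDual ℝ (EuclideanSpace ℝ (Fin d))) (c i • gradient (F i) θ₀)
          = c i • (InnerProductSpace.toDual ℝ (EuclideanSpace ℝ (Fin d))) (gradient (F i) θ₀) := by
        simp
      rw [heq]; exact h4
    exact h5.gradient
  -- bound on c i
  have hcb : ∀ i, |c i| ≤ β := by
    intro i
    have hlp : ‖fderiv ℝ (fun z => ℓ z (y i)) (F i θ₀)‖ ≤ β := by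
      apply norm_fderiv_le_of_lip' ℝ hβ
      filter_upwards with x
      simpa [Real.norm_eq_abs] using hlip (y i) x (F i θ₀)
    have : c i = fderiv ℝ (fun z => ℓ z (y i)) (F i θ₀) 1 := by
      simp [hc, fderiv_apply_one_eq_deriv]
    rw [this]
    calc |fderiv ℝ (fun z => ℓ z (y i)) (F i θ₀) 1|
        ≤ ‖fderiv ℝ (fun z => ℓ z (y i)) (F i θ₀)‖ * ‖(1:ℝ)‖ :=
          (fderiv ℝ (fun z => ℓ z (y i)) (F i θ₀)).le_opNorm 1
      _ ≤ β := by simpa using hlp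
  -- triangle and Lipschitz
  have step1 : ‖(1 / (m : ℝ)) • ∑ i, gradient (fun θ => ℓ (F i θ) (y i)) θ₀‖ ≤
      β * ((1 / (m : ℝ)) * ∑ i, ‖gradient (F i) θ₀‖) := by
    rw [norm_smul]
    have h6 : ‖∑ i, gradient (fun θ => ℓ (F i θ) (y i)) θ₀‖ ≤ β * ∑ i, ‖gradient (F i) θ₀‖ := by
      calc ‖∑ i, gradient (fun θ => ℓ (F i θ) (y i)) θ₀‖
          ≤ ∑ i, ‖gradient (fun θ => ℓ (F i θ) (y i)) θ₀‖ := norm_sum_le _ _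
        _ ≤ ∑ i, β * ‖gradient (F i) θ₀‖ := by
            apply Finset.sum_le_sum
            intro i _
            rw [hgrad i, norm_smul, Real.norm_eq_abs]
            exact mul_le_mul_of_nonneg_right (hcb i) (norm_nonneg _)
        _ = β * ∑ i, ‖gradient (F i) θ₀‖ := by rw [Finset.mul_sum]
    have hn : ‖(1 / (m : ℝ))‖ = 1 / (m : ℝ) := by
      rw [Real.norm_eq_abs, abs_of_nonneg]; positivity
    rw [hn]
    calc (1 / (m : ℝ)) * ‖∑ i, gradient (fun θ => ℓ (F i θ) (y i)) θ₀‖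
        ≤ (1 / (m : ℝ)) * (β * ∑ i, ‖gradient (F i) θ₀‖) := by
          apply mul_le_mul_of_nonneg_left h6; positivity
      _ = β * ((1 / (m : ℝ)) * ∑ i, ‖gradient (F i) θ₀‖) := by ring
  -- Cauchy-Schwarz step
  have step2 : (1 / (m : ℝ)) * ∑ i, ‖gradient (F i) θ₀‖ ≤
      Real.sqrt ((1 / (m : ℝ)) * ∑ i, ‖gradient (F i) θ₀‖ ^ 2) := by
    rw [Real.le_sqrt (by positivity) (by positivity)]
    have hcs : (∑ i, ‖gradient (F i) θ₀‖) ^ 2 ≤ (m : ℝ) * ∑ i, ‖gradient (F i) θ₀‖ ^ 2 := by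
      have := sq_sum_le_card_mul_sum_sq (s := Finset.univ) (f := fun i => ‖gradient (F i) θ₀‖)
      simpa using this
    have hm' : (0:ℝ) < m := by exact_mod_cast hm
    rw [mul_pow]
    calc (1 / (m : ℝ)) ^ 2 * (∑ i, ‖gradient (F i) θ₀‖) ^ 2
        ≤ (1 / (m : ℝ)) ^ 2 * ((m : ℝ) * ∑ i, ‖gradient (F i) θ₀‖ ^ 2) := by
          apply mul_le_mul_of_nonneg_left hcs; positivity
      _ = (1 / (m : ℝ)) * ∑ i, ‖gradient (F i) θ₀‖ ^ 2 := by
          field_simp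
  calc ‖(1 / (m : ℝ)) • ∑ i, gradient (fun θ => ℓ (F i θ) (y i)) θ₀‖
      ≤ β * ((1 / (m : ℝ)) * ∑ i, ‖gradient (F i) θ₀‖) := step1
    _ ≤ β * Real.sqrt ((1 / (m : ℝ)) * ∑ i, ‖gradient (F i) θ₀‖ ^ 2) :=
        mul_le_mul_of_nonneg_left step2 hβ
end

section
/- Let X₁,...,X_k be independent standard normal random variables and Y = Σᵢ Xᵢ². Then for any ε > 0, P(Y - k ≥ 2√(kε) + 2ε) ≤ exp(-ε). -/
/-!
Chernoff's method. For a centred Gaussian `X` of variance `v`, `𝔼 exp (t X²) = (1 - 2 v t)^(-1/2)`,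
so independence gives `P(Y ≥ a) ≤ exp (-t a) (1 - 2t)^(-k/2)` for `0 ≤ t < 1/2`. The inequality
`sinh s ≤ s` at `s = log (1 - 2t) ≤ 0` reads `-½ log (1 - 2t) ≤ t + t² / (1 - 2t)`, and with
`t = √ε / (√k + 2√ε)` the resulting exponent `-t a + k (t + t² / (1 - 2t))` is exactly `-ε`.
-/

open MeasureTheory ProbabilityTheory Real
open scoped NNReal

lemma Real.inv_sqrt_one_sub_two_mul_le_exp {t : ℝ} (h0 : 0 ≤ t) (h1 : t < 1 / 2) :
    (√(1 - 2 * t))⁻¹ ≤ exp (t + t ^ 2 / (1 - 2 * t)) := by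
  have hy : 0 < 1 - 2 * t := by linarith
  have hsinh : sinh (log (1 - 2 * t)) ≤ log (1 - 2 * t) :=
    sinh_le_self_iff.mpr (log_nonpos hy.le (by linarith))
  rw [sinh_log hy] at hsinh
  have hquarter : ((1 - 2 * t)⁻¹ - (1 - 2 * t)) / 4 = t + t ^ 2 / (1 - 2 * t) := by
    field_simp
    ring
  rw [← exp_log (inv_pos.2 (sqrt_pos.2 hy)), log_inv, log_sqrt hy.le, exp_le_exp]
  linarith

lemma Real.laurentMassart_exponent_eq {k ε t : ℝ} (hk : 0 < k) (hε : 0 < ε)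
    (ht : t = √ε / (√k + 2 * √ε)) :
    -t * (k + (2 * √(k * ε) + 2 * ε)) + k * (t + t ^ 2 / (1 - 2 * t)) = -ε := by
  obtain ⟨s, hs, rfl⟩ : ∃ s, 0 < s ∧ k = s ^ 2 := ⟨√k, sqrt_pos.2 hk, (sq_sqrt hk.le).symm⟩
  obtain ⟨e, he, rfl⟩ : ∃ e, 0 < e ∧ ε = e ^ 2 := ⟨√ε, sqrt_pos.2 hε, (sq_sqrt hε.le).symm⟩
  rw [sqrt_sq hs.le, sqrt_sq he.le] at ht
  have hden : 1 - 2 * t = s / (s + 2 * e) := by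
    rw [ht]
    field_simp
    ring
  rw [← mul_pow, sqrt_sq (by positivity), hden, ht]
  field_simp
  ring

namespace ProbabilityTheory

lemma integral_exp_mul_sq_gaussianReal {v : ℝ≥0} {t : ℝ} (ht : v * t < 1 / 2) :
    ∫ x, exp (t * x ^ 2) ∂gaussianReal 0 v = (√(1 - 2 * v * t))⁻¹ := by
  rcases eq_or_ne v 0 with rfl | hv
  · simp [gaussianReal_zero_var]
  have hv' : (0 : ℝ) < v := by positivity
  have hb : 0 < 1 / (2 * v) - t := by
    rw [sub_pos, lt_div_iff₀ (by positivity)]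
    linarith
  calc ∫ x, exp (t * x ^ 2) ∂gaussianReal 0 v
      = ∫ x, (√(2 * π * v))⁻¹ * exp (-(1 / (2 * v) - t) * x ^ 2) := by
        rw [integral_gaussianReal_eq_integral_smul hv]
        congr 1 with x
        rw [gaussianPDFReal, smul_eq_mul, mul_assoc, ← exp_add]
        congr 2
        field_simp
        ring
    _ = (√(2 * π * v))⁻¹ * √(π / (1 / (2 * v) - t)) := by
        rw [integral_const_mul, integral_gaussian]
    _ = (√(1 - 2 * v * t))⁻¹ := by
        rw [← sqrt_inv, ← sqrt_mul (by positivity), ← sqrt_inv]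
        congr 1
        field_simp

lemma mgf_sq_of_map_eq_gaussianReal {Ω : Type*} [MeasurableSpace Ω] {μ : Measure Ω}
    {X : Ω → ℝ} {v : ℝ≥0} (hX : μ.map X = gaussianReal 0 v) {t : ℝ} (ht : v * t < 1 / 2) :
    mgf (fun ω ↦ X ω ^ 2) μ t = (√(1 - 2 * v * t))⁻¹ := by
  have hXm : AEMeasurable X μ :=
    .of_map_ne_zero (by rw [hX]; exact IsProbabilityMeasure.ne_zero _)
  rw [← integral_exp_mul_sq_gaussianReal ht, ← hX]
  exact (mgf_map (X := fun x ↦ x ^ 2) (t := t) hXm (by fun_prop)).symm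

lemma measureReal_sum_sq_ge_le_of_gaussianReal {Ω ι : Type*} [MeasurableSpace Ω]
    {μ : Measure Ω} [IsProbabilityMeasure μ] [Fintype ι] {X : ι → Ω → ℝ} {v : ℝ≥0}
    (hindep : iIndepFun X μ) (hX : ∀ i, μ.map (X i) = gaussianReal 0 v) {t : ℝ} (ht0 : 0 ≤ t)
    (ht : v * t < 1 / 2) (a : ℝ) :
    μ.real {ω | a ≤ ∑ i, X i ω ^ 2} ≤ exp (-t * a) * (√(1 - 2 * v * t))⁻¹ ^ Fintype.card ι := by
  set Y : ι → Ω → ℝ := fun i ω ↦ X i ω ^ 2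
  have hY : iIndepFun Y μ := hindep.comp (fun _ x ↦ x ^ 2) (fun _ ↦ by fun_prop)
  have hYm : ∀ i, AEMeasurable (Y i) μ := fun i ↦
    (AEMeasurable.of_map_ne_zero (by rw [hX i]; exact IsProbabilityMeasure.ne_zero _)).pow_const 2
  have hmgf : mgf (∑ i, Y i) μ t = (√(1 - 2 * v * t))⁻¹ ^ Fintype.card ι := by
    rw [hY.mgf_sum₀ hYm, Finset.prod_congr rfl fun i _ ↦ mgf_sq_of_map_eq_gaussianReal (hX i) ht,
      Finset.prod_const, Finset.card_univ]
  have hint : Integrable (fun ω ↦ exp (t * (∑ i, Y i) ω)) μ := by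
    rw [← mgf_pos_iff, hmgf]
    have : 0 < 1 - 2 * v * t := by linarith
    positivity
  simpa [Y, hmgf] using measure_ge_le_exp_mul_mgf a ht0 hint

end ProbabilityTheory

theorem stmt_6_general {Ω : Type*} [MeasurableSpace Ω] (μ : Measure Ω) [IsProbabilityMeasure μ]
    (k : ℕ) (X : Fin k → Ω → ℝ)
    (hindep : iIndepFun X μ)
    (hgauss : ∀ i, μ.map (X i) = gaussianReal 0 1)
    (ε : ℝ) (hε : 0 < ε) :
    μ {ω | (k : ℝ) + (2 * Real.sqrt (k * ε) + 2 * ε) ≤ ∑ i, (X i ω) ^ 2}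
      ≤ ENNReal.ofReal (Real.exp (-ε)) := by
  rcases Nat.eq_zero_or_pos k with rfl | hk
  · have : ¬ 2 * ε ≤ 0 := by linarith
    simp [this]
  set t := √ε / (√k + 2 * √ε) with ht
  have ht0 : 0 ≤ t := by positivity
  have ht1 : t < 1 / 2 := by
    rw [ht, div_lt_iff₀ (by positivity)]
    linarith [sqrt_pos.2 (Nat.cast_pos.2 hk : (0 : ℝ) < k)]
  set a := (k : ℝ) + (2 * √(k * ε) + 2 * ε)
  rw [ENNReal.le_ofReal_iff_toReal_le (measure_ne_top μ _) (exp_nonneg _)]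
  calc μ.real {ω | a ≤ ∑ i, X i ω ^ 2}
      ≤ exp (-t * a) * (√(1 - 2 * t))⁻¹ ^ k := by
        simpa using
          measureReal_sum_sq_ge_le_of_gaussianReal hindep hgauss ht0 (by simpa using ht1) a
    _ ≤ exp (-t * a) * exp (t + t ^ 2 / (1 - 2 * t)) ^ k := by
        gcongr
        exact inv_sqrt_one_sub_two_mul_le_exp ht0 ht1
    _ = exp (-ε) := by
        rw [← exp_nat_mul, ← exp_add, laurentMassart_exponent_eq (Nat.cast_pos.2 hk) hε ht]

/-- Laurent–Massart upper tail bound for chi-squared: if `X₁,...,X_k` are i.i.d. standard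
normal then `P(Σᵢ Xᵢ² - k ≥ 2√(kε) + 2ε) ≤ exp(-ε)`. -/
theorem stmt_6 {Ω : Type*} [MeasurableSpace Ω] (μ : Measure Ω) [IsProbabilityMeasure μ]
    (k : ℕ) (X : Fin k → Ω → ℝ)
    (hmeas : ∀ i, Measurable (X i))
    (hindep : iIndepFun X μ)
    (hgauss : ∀ i, μ.map (X i) = gaussianReal 0 1)
    (ε : ℝ) (hε : 0 < ε) :
    μ {ω | (k : ℝ) + (2 * Real.sqrt (k * ε) + 2 * ε) ≤ ∑ i, (X i ω) ^ 2}
      ≤ ENNReal.ofReal (Real.exp (-ε)) :=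
  stmt_6_general μ k X hindep hgauss ε hε
end

section
/- Let Θ be a symmetric positive definite m×m matrix, ŷ ∈ ℝ^m, and 0 < η < m/λ_max(Θ). Define the gradient descent iteration on the linear model f_t = (I - (η/m)Θ)^t ŷ. Then the θ-space displacement after t steps, θ_t - θ₀ = (η/m) Jᵀ Σ_{k=0}^{t-1} (I - (η/m)Θ)^k ŷ where Θ = JJᵀ, satisfies ‖θ_t - θ₀‖₂ ≤ ‖θ_∞ - θ₀‖₂ = √(ŷᵀ Θ⁻¹ ŷ). -/
/-!
Diagonalize `Θ = U diag(λ) Uᵀ` and let `zᵢ` be the coordinates of `ŷ` in the eigenbasis. Then `Θ`,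
`Θ⁻¹` and the matrix geometric sum `Σ_{k<t} (I - cΘ)^k` (with `c = η/m`) all act diagonally, and
the scalar geometric sum telescopes: `cλᵢ Σ_{k<t} rᵢ^k = 1 - rᵢ^t` with `rᵢ = 1 - cλᵢ`. Hence
`‖θ_t - θ₀‖² = Σᵢ (1 - rᵢ^t)² zᵢ²/λᵢ` while `ŷᵀΘ⁻¹ŷ = Σᵢ zᵢ²/λᵢ`. The step-size condition puts
every `rᵢ` in `[0, 1)`, so each factor `(1 - rᵢ^t)²` lies in `[0, 1]` and tends to `1`.
-/

open Matrix Filter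

/-- The parameter displacement of gradient descent on the linearized model after `t` steps:
`θ_t - θ₀ = (η/m) Jᵀ Σ_{k<t} (I - (η/m)Θ)^k ŷ`. -/
noncomputable def disp {m d : ℕ} (J : Matrix (Fin m) (Fin d) ℝ)
    (Θ : Matrix (Fin m) (Fin m) ℝ) (η : ℝ) (yhat : Fin m → ℝ) (t : ℕ) : Fin d → ℝ :=
  (η / m) • (Jᵀ *ᵥ ∑ k ∈ Finset.range t, ((1 - (η / m) • Θ) ^ k) *ᵥ yhat)

lemma transpose_mulVec_dotProduct_self {m d R : Type*} [Fintype m] [Fintype d] [CommSemiring R]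
    (J : Matrix m d R) (v : m → R) :
    (Jᵀ *ᵥ v) ⬝ᵥ (Jᵀ *ᵥ v) = v ⬝ᵥ ((J * Jᵀ) *ᵥ v) := by
  rw [dotProduct_mulVec, vecMul_transpose, mulVec_mulVec, dotProduct_comm]

namespace Matrix.IsHermitian

variable {n : Type*} [Fintype n] [DecidableEq n] {A : Matrix n n ℝ} (hA : A.IsHermitian)

noncomputable def eigenDiag : (n → ℝ) →ₐ[ℝ] Matrix n n ℝ :=
  (Unitary.conjStarAlgAut ℝ _ hA.eigenvectorUnitary).toAlgEquiv.toAlgHom.comp (diagonalAlgHom ℝ)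

lemma eigenDiag_apply (f : n → ℝ) :
    hA.eigenDiag f =
      (hA.eigenvectorUnitary : Matrix n n ℝ) * diagonal f *
        star (hA.eigenvectorUnitary : Matrix n n ℝ) :=
  rfl

lemma eigenDiag_eigenvalues : hA.eigenDiag hA.eigenvalues = A := by
  conv_rhs => rw [hA.spectral_theorem]
  rfl

lemma eigenDiag_mulVec (f y : n → ℝ) :
    hA.eigenDiag f *ᵥ y =
      (hA.eigenvectorUnitary : Matrix n n ℝ) *ᵥ
        (f * (star (hA.eigenvectorUnitary : Matrix n n ℝ) *ᵥ y)) := by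
  rw [eigenDiag_apply, ← mulVec_mulVec, ← mulVec_mulVec]
  congr 1
  ext i
  simp [mulVec_diagonal]

lemma eigenDiag_mulVec_dotProduct (f g y : n → ℝ) :
    (hA.eigenDiag f *ᵥ y) ⬝ᵥ (hA.eigenDiag g *ᵥ y) =
      ∑ i, f i * g i * (star (hA.eigenvectorUnitary : Matrix n n ℝ) *ᵥ y) i ^ 2 := by
  set U : Matrix n n ℝ := (hA.eigenvectorUnitary : Matrix n n ℝ)
  have hU : Uᵀ * U = 1 := Unitary.coe_star_mul_self hA.eigenvectorUnitary
  rw [eigenDiag_mulVec, eigenDiag_mulVec, dotProduct_mulVec, ← mulVec_transpose, mulVec_mulVec,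
    hU, one_mulVec]
  simp only [dotProduct, Pi.mul_apply]
  exact Finset.sum_congr rfl fun i _ => by ring

lemma mulVec_eigenDiag_mulVec (f y : n → ℝ) :
    A *ᵥ (hA.eigenDiag f *ᵥ y) = hA.eigenDiag (hA.eigenvalues * f) *ᵥ y := by
  rw [mulVec_mulVec, map_mul, eigenDiag_eigenvalues]

lemma geom_sum_one_sub_smul_eq_eigenDiag (c : ℝ) (t : ℕ) :
    ∑ k ∈ Finset.range t, (1 - c • A) ^ k =
      hA.eigenDiag (∑ k ∈ Finset.range t, (1 - c • hA.eigenvalues) ^ k) := by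
  simp only [map_sum, map_pow, map_sub, map_one, map_smul, eigenDiag_eigenvalues]

lemma inv_eq_eigenDiag (h : ∀ i, hA.eigenvalues i ≠ 0) :
    A⁻¹ = hA.eigenDiag hA.eigenvalues⁻¹ := by
  refine inv_eq_right_inv ?_
  calc A * hA.eigenDiag hA.eigenvalues⁻¹
      = hA.eigenDiag (hA.eigenvalues * hA.eigenvalues⁻¹) := by
        rw [map_mul, eigenDiag_eigenvalues]
    _ = 1 := by
        rw [show hA.eigenvalues * hA.eigenvalues⁻¹ = 1 from
          funext fun i => mul_inv_cancel₀ (h i), map_one]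

lemma dotProduct_inv_mulVec (h : ∀ i, hA.eigenvalues i ≠ 0) (y : n → ℝ) :
    y ⬝ᵥ (A⁻¹ *ᵥ y) =
      ∑ i, (star (hA.eigenvectorUnitary : Matrix n n ℝ) *ᵥ y) i ^ 2 / hA.eigenvalues i := by
  calc y ⬝ᵥ (A⁻¹ *ᵥ y)
      = (hA.eigenDiag 1 *ᵥ y) ⬝ᵥ (hA.eigenDiag hA.eigenvalues⁻¹ *ᵥ y) := by
        rw [map_one, one_mulVec, hA.inv_eq_eigenDiag h]
    _ = _ := by
        rw [hA.eigenDiag_mulVec_dotProduct]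
        simp only [Pi.one_apply, Pi.inv_apply, one_mul, div_eq_inv_mul]

end Matrix.IsHermitian

lemma sq_mul_mul_geom_sum_one_sub_mul_sq {c l : ℝ} (hl : l ≠ 0) (t : ℕ) :
    c ^ 2 * l * (∑ k ∈ Finset.range t, (1 - c * l) ^ k) ^ 2 = (1 - (1 - c * l) ^ t) ^ 2 / l := by
  rw [← mul_neg_geom_sum, sub_sub_cancel, eq_div_iff hl]
  ring

lemma sum_sq_one_sub_pow_mul_le {ι : Type*} (s : Finset ι) {x w : ι → ℝ}
    (hx : ∀ i ∈ s, 0 ≤ x i ∧ x i ≤ 1) (hw : ∀ i ∈ s, 0 ≤ w i) (t : ℕ) :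
    ∑ i ∈ s, (1 - x i ^ t) ^ 2 * w i ≤ ∑ i ∈ s, w i := by
  refine Finset.sum_le_sum fun i hi => mul_le_of_le_one_left (hw i hi) ?_
  obtain ⟨hx0, hx1⟩ := hx i hi
  exact pow_le_one₀ (sub_nonneg.2 (pow_le_one₀ hx0 hx1)) (by linarith [pow_nonneg hx0 t])

lemma tendsto_sum_sq_one_sub_pow_mul {ι : Type*} (s : Finset ι) {x : ι → ℝ}
    (hx : ∀ i ∈ s, |x i| < 1) (w : ι → ℝ) :
    Tendsto (fun t : ℕ => ∑ i ∈ s, (1 - x i ^ t) ^ 2 * w i) atTop (nhds (∑ i ∈ s, w i)) := by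
  refine tendsto_finsetSum s fun i hi => ?_
  have := ((tendsto_const_nhds (x := 1)).sub
    (tendsto_pow_atTop_nhds_zero_of_abs_lt_one (hx i hi))).pow 2 |>.mul_const (w i)
  simpa using this

lemma disp_dotProduct_self {m d : ℕ} {J : Matrix (Fin m) (Fin d) ℝ}
    {Θ : Matrix (Fin m) (Fin m) ℝ} (hJ : Θ = J * Jᵀ) (hΘ : Θ.IsHermitian)
    (hl : ∀ i, hΘ.eigenvalues i ≠ 0) (η : ℝ) (y : Fin m → ℝ) (t : ℕ) :
    disp J Θ η y t ⬝ᵥ disp J Θ η y t =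
      ∑ i, (1 - (1 - η / m * hΘ.eigenvalues i) ^ t) ^ 2 *
        ((star (hΘ.eigenvectorUnitary : Matrix (Fin m) (Fin m) ℝ) *ᵥ y) i ^ 2 /
          hΘ.eigenvalues i) := by
  set c := η / m
  set s : Fin m → ℝ := ∑ k ∈ Finset.range t, (1 - c • hΘ.eigenvalues) ^ k
  have hsum : ∑ k ∈ Finset.range t, (1 - c • Θ) ^ k *ᵥ y = hΘ.eigenDiag s *ᵥ y := by
    rw [← sum_mulVec, hΘ.geom_sum_one_sub_smul_eq_eigenDiag]
  calc disp J Θ η y t ⬝ᵥ disp J Θ η y t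
      = c ^ 2 * ((hΘ.eigenDiag s *ᵥ y) ⬝ᵥ (Θ *ᵥ (hΘ.eigenDiag s *ᵥ y))) := by
        rw [disp, hsum, dotProduct_smul, smul_dotProduct, transpose_mulVec_dotProduct_self, ← hJ]
        simp only [smul_eq_mul]
        ring
    _ = ∑ i, c ^ 2 * hΘ.eigenvalues i * s i ^ 2 *
          (star (hΘ.eigenvectorUnitary : Matrix (Fin m) (Fin m) ℝ) *ᵥ y) i ^ 2 := by
        rw [hΘ.mulVec_eigenDiag_mulVec, hΘ.eigenDiag_mulVec_dotProduct, Finset.mul_sum]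
        simp only [Pi.mul_apply]
        exact Finset.sum_congr rfl fun i _ => by ring
    _ = _ := by
        refine Finset.sum_congr rfl fun i _ => ?_
        simp only [s, Finset.sum_apply, Pi.pow_apply, Pi.sub_apply, Pi.one_apply, Pi.smul_apply,
          smul_eq_mul, sq_mul_mul_geom_sum_one_sub_mul_sq (hl i)]
        ring

/-- For `Θ = JJᵀ` symmetric positive definite and `0 < η < m / λ_max(Θ)`, the displacement
norms `‖θ_t - θ₀‖₂` are bounded by `‖θ_∞ - θ₀‖₂ = √(ŷᵀ Θ⁻¹ ŷ)`, which is their limit. -/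
theorem stmt_8 {m d : ℕ} (J : Matrix (Fin m) (Fin d) ℝ)
    (Θ : Matrix (Fin m) (Fin m) ℝ) (hJ : Θ = J * Jᵀ)
    (hΘ : Θ.IsHermitian) (hpd : Θ.PosDef)
    (lammax : ℝ) (hmax : ∀ i, hΘ.eigenvalues i ≤ lammax)
    (η : ℝ) (hη0 : 0 < η) (hηm : η < m / lammax)
    (yhat : Fin m → ℝ) :
    (∀ t : ℕ, Real.sqrt (disp J Θ η yhat t ⬝ᵥ disp J Θ η yhat t) ≤
        Real.sqrt (yhat ⬝ᵥ (Θ⁻¹ *ᵥ yhat))) ∧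
      Tendsto (fun t : ℕ => Real.sqrt (disp J Θ η yhat t ⬝ᵥ disp J Θ η yhat t)) atTop
        (nhds (Real.sqrt (yhat ⬝ᵥ (Θ⁻¹ *ᵥ yhat)))) := by
  have hpos : ∀ i, 0 < hΘ.eigenvalues i := hpd.eigenvalues_pos
  have hstep : ∀ i, 0 < η / m * hΘ.eigenvalues i ∧ η / m * hΘ.eigenvalues i < 1 := by
    intro i
    have hm : (0 : ℝ) < m := Nat.cast_pos.2 i.pos
    have hmax_pos : 0 < lammax := (hpos i).trans_le (hmax i)
    refine ⟨mul_pos (div_pos hη0 hm) (hpos i), ?_⟩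
    calc η / m * hΘ.eigenvalues i ≤ η / m * lammax := by gcongr; exact hmax i
      _ < 1 := by rwa [div_mul_eq_mul_div, div_lt_one hm, ← lt_div_iff₀ hmax_pos]
  simp only [disp_dotProduct_self hJ hΘ fun i => (hpos i).ne',
    hΘ.dotProduct_inv_mulVec fun i => (hpos i).ne']
  refine ⟨fun t => Real.sqrt_le_sqrt
      (sum_sq_one_sub_pow_mul_le _ (fun i _ => ?_) (fun i _ => ?_) t),
    (tendsto_sum_sq_one_sub_pow_mul _ (fun i _ => ?_) _).sqrt⟩
  · constructor <;> linarith [hstep i]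
  · exact div_nonneg (sq_nonneg _) (hpos i).le
  · rw [abs_lt]
    constructor <;> linarith [hstep i]
end
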